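/- arXiv:2001.07314 — 2 statements merged into one kernel-verified Lean document; each statement's English description precedes it below -/
import Mathlib

section
/- For every $\eta$ with $1<\eta\le 2$ there exists a constant $C_\eta>0$ such that for all real numbers $a,b$, $|a-b|^{\eta} \le C_{\eta}\big((|a|^{\eta-2}a-|b|^{\eta-2}b)(a-b)\big)^{\eta/2}\big(|a|^{\eta}+|b|^{\eta}\big)^{(2-\eta)/2}$. -/
/-!
Write `φ x = |x| ^ (η - 2) * x` and `p = η - 1 ∈ (0, 1]`, so that `φ x = x ^ p` for `x ≥ 0` and
`φ` is odd. The heart of the matter is the lower bound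
`(η - 1) (a - b) ^ 2 ≤ (φ a - φ b) (a - b) (|a| + |b|) ^ (2 - η)`.
When `a` and `b` have the same sign it follows from the concavity of `x ↦ x ^ p` (Bernoulli's
inequality); when they have opposite signs `|a - b| = |a| + |b|` and it follows from the
subadditivity `(x + y) ^ p ≤ x ^ p + y ^ p`. Raising the bound to the power `η / 2` and using
`(|a| + |b|) ^ η ≤ 2 ^ (η - 1) (|a| ^ η + |b| ^ η)` gives the theorem.
-/

open Real

namespace Real

lemma rpow_add_le_mul_rpow_add_rpow {x y p : ℝ} (hx : 0 ≤ x) (hy : 0 ≤ y) (hp : 1 ≤ p) :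
    (x + y) ^ p ≤ 2 ^ (p - 1) * (x ^ p + y ^ p) := by
  lift x to NNReal using hx
  lift y to NNReal using hy
  exact_mod_cast NNReal.rpow_add_le_mul_rpow_add_rpow x y hp

/-- The tangent-line inequality for the concave function `x ↦ x ^ p` at `a`, multiplied by
`a ^ (1 - p)`. -/
lemma mul_sub_le_rpow_one_sub_mul_rpow_sub_rpow {p a b : ℝ} (hp₀ : 0 ≤ p) (hp₁ : p ≤ 1)
    (ha : 0 < a) (hb : 0 ≤ b) : p * (a - b) ≤ a ^ (1 - p) * (a ^ p - b ^ p) := by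
  have bernoulli := rpow_one_add_le_one_add_mul_self (s := b / a - 1)
    (by linarith [div_nonneg hb ha.le]) hp₀ hp₁
  rw [add_sub_cancel, div_rpow hb ha.le] at bernoulli
  have hsplit : a ^ (1 - p) * a ^ p = a := by
    rw [← rpow_add ha, sub_add_cancel, rpow_one]
  have hb' : a ^ (1 - p) * b ^ p ≤ a + p * (b - a) := by
    calc a ^ (1 - p) * b ^ p = a ^ (1 - p) * a ^ p * (b ^ p / a ^ p) := by field_simp
      _ = a * (b ^ p / a ^ p) := by rw [hsplit]
      _ ≤ a * (1 + p * (b / a - 1)) := mul_le_mul_of_nonneg_left bernoulli ha.le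
      _ = a + p * (b - a) := by field_simp
  linear_combination hb' - hsplit

lemma mul_sq_le_rpow_sub_rpow_mul_sub_mul_rpow {p a b : ℝ} (hp₀ : 0 ≤ p) (hp₁ : p ≤ 1)
    (hb : 0 ≤ b) (hba : b ≤ a) :
    p * (a - b) ^ 2 ≤ (a ^ p - b ^ p) * (a - b) * (a + b) ^ (1 - p) := by
  obtain rfl | hba := hba.eq_or_lt
  · simp
  have ha : 0 < a := hb.trans_lt hba
  have tangent := mul_sub_le_rpow_one_sub_mul_rpow_sub_rpow hp₀ hp₁ ha hb
  have hmono : a ^ (1 - p) ≤ (a + b) ^ (1 - p) :=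
    rpow_le_rpow ha.le (by linarith) (by linarith)
  have hdiff : 0 ≤ a ^ p - b ^ p := sub_nonneg.2 (rpow_le_rpow hb hba.le hp₀)
  have hpab : p * (a - b) ≤ (a ^ p - b ^ p) * (a + b) ^ (1 - p) :=
    (tangent.trans (mul_le_mul_of_nonneg_right hmono hdiff)).trans_eq (mul_comm _ _)
  nlinarith [mul_le_mul_of_nonneg_right hpab (sub_nonneg.2 hba.le)]

lemma mul_sq_le_rpow_add_rpow_mul_add_mul_rpow {p a c : ℝ} (hp₀ : 0 ≤ p) (hp₁ : p ≤ 1)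
    (ha : 0 ≤ a) (hc : 0 ≤ c) :
    p * (a + c) ^ 2 ≤ (a ^ p + c ^ p) * (a + c) * (a + c) ^ (1 - p) := by
  have hac : 0 ≤ a + c := add_nonneg ha hc
  have hsplit : (a + c) ^ 2 = (a + c) ^ p * (a + c) * (a + c) ^ (1 - p) := by
    rw [mul_right_comm, ← rpow_add' hac (by norm_num), add_sub_cancel, rpow_one, sq]
  calc p * (a + c) ^ 2 ≤ (a + c) ^ 2 := mul_le_of_le_one_left (sq_nonneg _) hp₁
    _ = (a + c) ^ p * (a + c) * (a + c) ^ (1 - p) := hsplit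
    _ ≤ (a ^ p + c ^ p) * (a + c) * (a + c) ^ (1 - p) := by
      gcongr
      exact rpow_add_le_add_rpow ha hc hp₀ hp₁

end Real

section SignedPower

variable {η : ℝ}

lemma abs_rpow_sub_two_mul_self_of_nonneg (hη : η ≠ 1) {x : ℝ} (hx : 0 ≤ x) :
    |x| ^ (η - 2) * x = x ^ (η - 1) := by
  rw [abs_of_nonneg hx, ← rpow_add_one' hx (by contrapose! hη; linarith)]
  ring_nf

lemma abs_rpow_sub_two_mul_neg (x : ℝ) :
    |-x| ^ (η - 2) * -x = -(|x| ^ (η - 2) * x) := by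
  rw [abs_neg, mul_neg]

lemma sub_one_mul_sq_le_of_nonneg_of_le (hη : 1 < η) (hη2 : η ≤ 2) {a b : ℝ}
    (hb : 0 ≤ b) (hba : b ≤ a) :
    (η - 1) * (a - b) ^ 2
      ≤ (|a| ^ (η - 2) * a - |b| ^ (η - 2) * b) * (a - b) * (|a| + |b|) ^ (2 - η) := by
  have h := mul_sq_le_rpow_sub_rpow_mul_sub_mul_rpow (p := η - 1) (by linarith) (by linarith) hb hba
  rwa [abs_rpow_sub_two_mul_self_of_nonneg hη.ne' (hb.trans hba),
    abs_rpow_sub_two_mul_self_of_nonneg hη.ne' hb, abs_of_nonneg hb,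
    abs_of_nonneg (hb.trans hba), show 2 - η = 1 - (η - 1) by ring]

lemma sub_one_mul_sq_le_of_le (hη : 1 < η) (hη2 : η ≤ 2) {a b : ℝ} (hba : b ≤ a) :
    (η - 1) * (a - b) ^ 2
      ≤ (|a| ^ (η - 2) * a - |b| ^ (η - 2) * b) * (a - b) * (|a| + |b|) ^ (2 - η) := by
  rcases le_total 0 b with hb | hb
  · exact sub_one_mul_sq_le_of_nonneg_of_le hη hη2 hb hba
  rcases le_total a 0 with ha | ha
  · have h := sub_one_mul_sq_le_of_nonneg_of_le hη hη2 (neg_nonneg.2 ha) (neg_le_neg hba)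
    rw [abs_rpow_sub_two_mul_neg, abs_rpow_sub_two_mul_neg, abs_neg, abs_neg, add_comm |b|] at h
    linear_combination h
  · have h := mul_sq_le_rpow_add_rpow_mul_add_mul_rpow (p := η - 1) (by linarith) (by linarith)
      ha (neg_nonneg.2 hb)
    have hφb : |b| ^ (η - 2) * b = -(-b) ^ (η - 1) := by
      rw [← abs_rpow_sub_two_mul_self_of_nonneg hη.ne' (neg_nonneg.2 hb), abs_neg]; ring
    rw [abs_rpow_sub_two_mul_self_of_nonneg hη.ne' ha, hφb, abs_of_nonneg ha, abs_of_nonpos hb,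
      show 2 - η = 1 - (η - 1) by ring]
    linear_combination h

lemma sub_one_mul_sq_le (hη : 1 < η) (hη2 : η ≤ 2) (a b : ℝ) :
    (η - 1) * (a - b) ^ 2
      ≤ (|a| ^ (η - 2) * a - |b| ^ (η - 2) * b) * (a - b) * (|a| + |b|) ^ (2 - η) := by
  rcases le_total b a with hba | hab
  · exact sub_one_mul_sq_le_of_le hη hη2 hba
  · have h := sub_one_mul_sq_le_of_le hη hη2 hab
    rw [add_comm |b|] at h
    linear_combination h

lemma abs_rpow_le_of_sub_one_mul_sq_le (hη : 1 < η) (hη2 : η ≤ 2) {d K s S : ℝ} (hK : 0 ≤ K)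
    (hs : 0 ≤ s) (h : (η - 1) * d ^ 2 ≤ K * s ^ (2 - η)) (hsS : s ^ η ≤ 2 ^ (η - 1) * S) :
    |d| ^ η ≤ (η - 1) ^ (-(η / 2)) * 2 ^ ((η - 1) * ((2 - η) / 2)) * K ^ (η / 2)
      * S ^ ((2 - η) / 2) := by
  have hS : 0 ≤ S := nonneg_of_mul_nonneg_right ((rpow_nonneg hs η).trans hsS) (by positivity)
  calc |d| ^ η = (d ^ 2) ^ (η / 2) := by
        rw [← sq_abs, ← rpow_natCast, ← rpow_mul (abs_nonneg _)]
        push_cast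
        ring_nf
    _ ≤ ((η - 1)⁻¹ * (K * s ^ (2 - η))) ^ (η / 2) := by
        gcongr
        rwa [le_inv_mul_iff₀ (by linarith)]
    _ = (η - 1) ^ (-(η / 2)) * K ^ (η / 2) * (s ^ η) ^ ((2 - η) / 2) := by
        rw [mul_rpow (inv_nonneg.2 (by linarith)) (by positivity), mul_rpow hK (by positivity),
          inv_rpow (by linarith), rpow_neg (by linarith), ← rpow_mul hs, ← rpow_mul hs]
        ring_nf
    _ ≤ (η - 1) ^ (-(η / 2)) * K ^ (η / 2) * (2 ^ (η - 1) * S) ^ ((2 - η) / 2) := by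
        gcongr
    _ = _ := by
        rw [mul_rpow (by positivity) hS, ← rpow_mul zero_le_two]
        ring

end SignedPower

theorem stmt1 (η : ℝ) (hη : 1 < η) (hη2 : η ≤ 2) :
    ∃ C : ℝ, 0 < C ∧ ∀ a b : ℝ,
      |a - b| ^ η ≤ C * ((|a| ^ (η - 2) * a - |b| ^ (η - 2) * b) * (a - b)) ^ (η / 2)
        * (|a| ^ η + |b| ^ η) ^ ((2 - η) / 2) := by
  refine ⟨(η - 1) ^ (-(η / 2)) * 2 ^ ((η - 1) * ((2 - η) / 2)), by positivity, fun a b => ?_⟩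
  obtain rfl | hab := eq_or_ne a b
  · simp [zero_rpow (by linarith : η ≠ 0), zero_rpow (by linarith : η / 2 ≠ 0)]
  have hs : 0 < |a| + |b| := (abs_pos.2 (sub_ne_zero.2 hab)).trans_le (abs_sub a b)
  have key := sub_one_mul_sq_le hη hη2 a b
  have hK : 0 ≤ (|a| ^ (η - 2) * a - |b| ^ (η - 2) * b) * (a - b) :=
    nonneg_of_mul_nonneg_left ((mul_nonneg (by linarith) (sq_nonneg _)).trans key)
      (rpow_pos_of_pos hs (2 - η))
  exact abs_rpow_le_of_sub_one_mul_sq_le hη hη2 hK hs.le key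
    (rpow_add_le_mul_rpow_add_rpow (abs_nonneg a) (abs_nonneg b) hη.le)
end

section
/- Let $g:\mathbb{R}\to\mathbb{R}$ be nondecreasing and locally Lipschitz, let $p>1$, and define $G(t)=\int_0^t g'(s)^{1/p}\,ds$. Then for all $a,b\in\mathbb{R}$, $|a-b|^{p-2}(a-b)\big(g(a)-g(b)\big)\ge |G(a)-G(b)|^p$. -/
open Real intervalIntegral

/-!
With `f = (g')^(1/p)` on `[b, a]`, Jensen's inequality for the convex function `t ↦ t^p`
gives `(∫ f)^p ≤ (a - b)^(p-1) ∫ f^p = (a - b)^(p-1) ∫ g'`, and for monotone `g` Lebesgue's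
theorem bounds `∫ g'` by `g a - g b`. Since `|a - b|^(p-2) (a - b) = (a - b)^(p-1)` for
`a ≥ b`, this is the claim; the case `a < b` follows by symmetry.
-/

open MeasureTheory Set

lemma rpow_le_one_add_of_le_one {t r : ℝ} (ht : 0 ≤ t) (hr0 : 0 ≤ r) (hr1 : r ≤ 1) :
    t ^ r ≤ 1 + t := by
  rcases le_total t 1 with ht1 | ht1
  · linarith [rpow_le_one ht ht1 hr0]
  · have := rpow_le_rpow_of_exponent_le ht1 hr1
    rw [rpow_one] at this
    linarith

lemma rpow_intervalIntegral_le_mul_intervalIntegral_rpow {f : ℝ → ℝ} {a b p : ℝ}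
    (hp : 1 ≤ p) (hab : a ≤ b) (hf0 : ∀ x, 0 ≤ f x) (hf : IntervalIntegrable f volume a b)
    (hfp : IntervalIntegrable (fun x => f x ^ p) volume a b) :
    (∫ x in a..b, f x) ^ p ≤ (b - a) ^ (p - 1) * ∫ x in a..b, f x ^ p := by
  rcases hab.eq_or_lt with rfl | hab
  · simp [zero_rpow (by linarith : p ≠ 0)]
  have hba : 0 < b - a := sub_pos.2 hab
  have jensen : (⨍ x in a..b, f x) ^ p ≤ ⨍ x in a..b, f x ^ p :=
    (convexOn_rpow hp).map_set_average_le
      (continuousOn_id.rpow_const fun _ _ => Or.inr (by linarith)) isClosed_Ici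
      (by simp [volume_uIoc, hba.ne']) (by simp [volume_uIoc]) (ae_of_all _ hf0) hf.def' hfp.def'
  rw [interval_average_eq_div, interval_average_eq_div,
    div_rpow (integral_nonneg hab.le fun x _ => hf0 x) hba.le,
    div_le_div_iff₀ (by positivity) hba] at jensen
  rw [rpow_sub_one hba.ne', div_mul_eq_mul_div, le_div_iff₀ hba]
  linarith

namespace Monotone

variable {g : ℝ → ℝ}

lemma intervalIntegrable_deriv_rpow (hg : Monotone g) {r : ℝ} (hr0 : 0 ≤ r) (hr1 : r ≤ 1)
    (a b : ℝ) : IntervalIntegrable (fun x => deriv g x ^ r) volume a b := by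
  refine ((intervalIntegrable_const (c := (1 : ℝ))).add
    (hg.monotoneOn _).intervalIntegrable_deriv).mono_fun
    ((measurable_deriv g).pow_const r).aestronglyMeasurable (ae_of_all _ fun x => ?_)
  have hx := hg.deriv_nonneg (x := x)
  simp only [norm_of_nonneg (rpow_nonneg hx r), norm_of_nonneg (by linarith : 0 ≤ 1 + deriv g x)]
  exact rpow_le_one_add_of_le_one hx hr0 hr1

lemma intervalIntegral_deriv_le (hg : Monotone g) {a b : ℝ} (hab : a ≤ b) :
    ∫ x in a..b, deriv g x ≤ g b - g a := by
  have h := (hg.monotoneOn (uIcc a b)).intervalIntegral_deriv_mem_uIcc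
  rw [uIcc_of_le (sub_nonneg.2 (hg hab))] at h
  exact h.2

lemma rpow_intervalIntegral_deriv_rpow_inv_le (hg : Monotone g) {p a b : ℝ} (hp : 1 ≤ p)
    (hab : a ≤ b) :
    (∫ x in a..b, deriv g x ^ p⁻¹) ^ p ≤ (b - a) ^ (p - 1) * (g b - g a) := by
  have hp0 : p ≠ 0 := by linarith
  have hinv : p⁻¹ ≤ 1 := inv_le_one_of_one_le₀ hp
  have hpow : ∀ x, (deriv g x ^ p⁻¹) ^ p = deriv g x := fun _ =>
    rpow_inv_rpow hg.deriv_nonneg hp0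
  calc (∫ x in a..b, deriv g x ^ p⁻¹) ^ p
      ≤ (b - a) ^ (p - 1) * ∫ x in a..b, deriv g x := by
        simpa only [hpow] using rpow_intervalIntegral_le_mul_intervalIntegral_rpow hp hab
          (fun x => rpow_nonneg hg.deriv_nonneg _)
          (hg.intervalIntegrable_deriv_rpow (by positivity) hinv a b)
          (by simpa only [hpow] using (hg.monotoneOn _).intervalIntegrable_deriv)
    _ ≤ (b - a) ^ (p - 1) * (g b - g a) := by
        gcongr
        exact hg.intervalIntegral_deriv_le hab

end Monotone

theorem stmt2_general (g : ℝ → ℝ) (hg : Monotone g)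
    (p : ℝ) (hp : 1 < p)
    (G : ℝ → ℝ) (hG : ∀ t, G t = ∫ s in (0:ℝ)..t, (deriv g s) ^ (1 / p)) :
    ∀ a b : ℝ, |G a - G b| ^ p ≤ |a - b| ^ (p - 2) * (a - b) * (g a - g b) := by
  intro a b
  wlog hba : b ≤ a generalizing a b
  · calc |G a - G b| ^ p = |G b - G a| ^ p := by rw [abs_sub_comm]
      _ ≤ |b - a| ^ (p - 2) * (b - a) * (g b - g a) := this b a (le_of_not_ge hba)
      _ = |a - b| ^ (p - 2) * (a - b) * (g a - g b) := by rw [abs_sub_comm]; ring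
  simp only [one_div] at hG
  have hint := hg.intervalIntegrable_deriv_rpow (inv_nonneg.2 (by linarith : 0 ≤ p))
    (inv_le_one_of_one_le₀ hp.le) 0
  have hGab : G a - G b = ∫ s in b..a, deriv g s ^ p⁻¹ := by
    rw [hG, hG, integral_interval_sub_left (hint a) (hint b)]
  have hodd : |a - b| ^ (p - 2) * (a - b) = (a - b) ^ (p - 1) := by
    rw [abs_of_nonneg (sub_nonneg.2 hba), ← rpow_add_one' (sub_nonneg.2 hba) (by linarith)]
    ring_nf
  rw [hGab, abs_of_nonneg (integral_nonneg hba fun x _ => rpow_nonneg hg.deriv_nonneg _), hodd]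
  exact hg.rpow_intervalIntegral_deriv_rpow_inv_le hp.le hba

theorem stmt2 (g : ℝ → ℝ) (hg : Monotone g) (hlip : LocallyLipschitz g)
    (p : ℝ) (hp : 1 < p)
    (G : ℝ → ℝ) (hG : ∀ t, G t = ∫ s in (0:ℝ)..t, (deriv g s) ^ (1 / p)) :
    ∀ a b : ℝ, |G a - G b| ^ p ≤ |a - b| ^ (p - 2) * (a - b) * (g a - g b) :=
  stmt2_general g hg p hp G hG
end
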